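/- Suppose the Markov kernel P satisfies PE(V, c, α, b, C) with C = {x : V(x) ≤ d} a sublevel set, that every sublevel set {x : V(x) ≤ r} is small, and that V(X) has bounded upward jumps off C: there exists K < ∞ such that P(x, {y : V(y) > V(x) + K}) = 0 for every x ∉ C. Then the chain is tame with respect to V; indeed it is tamed by a taming function of the form F(z) = ⌈λ z^{1−α}⌉ for z above a suitable level d' (and F(z) = 1 below), with the geometric drift coefficient β of the subsampled chain satisfying log β < (1−α)^{-1}·log α. -/

import Mathlib

open MeasureTheory ProbabilityTheory ENNReal Set

/-- `n`-fold composition power of a kernel. -/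
noncomputable def kpow {𝓧 : Type*} [MeasurableSpace 𝓧]
    (P : ProbabilityTheory.Kernel 𝓧 𝓧) : ℕ → ProbabilityTheory.Kernel 𝓧 𝓧
  | 0 => ProbabilityTheory.Kernel.id
  | n + 1 => P.comp (kpow P n)

/-- The taming function `F(z) = ⌈λ z^δ⌉` for `z > d'` and `F(z) = 1` for `z ≤ d'`. -/
noncomputable def tamingF (lam δ d' : ℝ) (z : ℝ) : ℕ :=
  if z ≤ d' then 1 else ⌈lam * z ^ δ⌉₊

/-- The bound `δ⁻¹·log(1−δ)`, interpreted as `−1` when `δ = 0`. -/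
noncomputable def tameBound (δ : ℝ) : ℝ :=
  if δ = 0 then -1 else δ⁻¹ * Real.log (1 - δ)

/-- `C` is a small set for the kernel `P`. -/
def IsSmallSet {𝓧 : Type*} [MeasurableSpace 𝓧]
    (P : ProbabilityTheory.Kernel 𝓧 𝓧) (C : Set 𝓧) : Prop :=
  ∃ m : ℕ, 0 < m ∧ ∃ ε : ℝ, 0 < ε ∧ ε ≤ 1 ∧ ∃ ν : Measure 𝓧, IsProbabilityMeasure ν ∧
    ∀ x ∈ C, ∀ E : Set 𝓧, MeasurableSet E → ENNReal.ofReal ε * ν E ≤ (kpow P m) x E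

/-- The chain with kernel `P` is *tame* with respect to the scale function `V`. -/
def IsTame {𝓧 : Type*} [MeasurableSpace 𝓧]
    (P : ProbabilityTheory.Kernel 𝓧 𝓧) (V : 𝓧 → ℝ) : Prop :=
  ∃ d' : ℝ, 1 ≤ d' ∧ IsSmallSet P {x | V x ≤ d'} ∧
    ∃ lam : ℝ, 0 < lam ∧ ∃ δ ∈ Set.Ico (0 : ℝ) 1, ∃ β ∈ Set.Ioo (0 : ℝ) 1, ∃ b' : ℝ,
      Real.log β < tameBound δ ∧
      ∀ x, ∫⁻ y, ENNReal.ofReal (V y) ∂((kpow P (tamingF lam δ d' (V x))) x)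
        ≤ ENNReal.ofReal (β * V x + Set.indicator {x' | V x' ≤ d'} (fun _ => b') x)

/-! Off `{V ≤ d}` the drift `PV ≤ V - c V^α` becomes, by concavity of `t ↦ t^(1-α)`, the
constant drift `P(V^(1-α)) ≤ V^(1-α) - (1-α) c`. Summed along the chain killed on entering
`{V ≤ d}` (the kernel powers `(P.restrict O)ⁿ` with `O = {d < V}`), it bounds the surviving mass
after `n` steps by `V(x)^(1-α) / ((1-α) c n)`. A surviving path has `V ≤ V(x) + nK` by the
bounded jumps, while a path that has entered `{V ≤ d}` has `𝔼 V ≤ d + nb` afterwards. Hence for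
`n = ⌈λ V(x)^(1-α)⌉` with `λ` large, `Pⁿ V(x) ≤ β V(x)` as soon as `V(x)` is large. -/

open Filter

namespace ProbabilityTheory.Kernel

variable {𝓧 : Type*} [MeasurableSpace 𝓧]

@[simp]
lemma one_apply (x : 𝓧) : (1 : Kernel 𝓧 𝓧) x = Measure.dirac x := id_apply x

instance isFiniteKernel_pow (κ : Kernel 𝓧 𝓧) [IsFiniteKernel κ] (n : ℕ) :
    IsFiniteKernel (κ ^ n) := by
  induction n with
  | zero => exact inferInstanceAs (IsFiniteKernel Kernel.id)
  | succ n ih => rw [pow_succ]; exact IsFiniteKernel.comp _ _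

instance isMarkovKernel_pow (κ : Kernel 𝓧 𝓧) [IsMarkovKernel κ] (n : ℕ) :
    IsMarkovKernel (κ ^ n) := by
  induction n with
  | zero => exact inferInstanceAs (IsMarkovKernel Kernel.id)
  | succ n ih => rw [pow_succ]; exact IsMarkovKernel.comp _ _

lemma lintegral_pow_succ (κ : Kernel 𝓧 𝓧) (n : ℕ) (x : 𝓧) {f : 𝓧 → ℝ≥0∞}
    (hf : Measurable f) :
    ∫⁻ y, f y ∂(κ ^ (n + 1)) x = ∫⁻ z, ∫⁻ y, f y ∂(κ ^ n) z ∂κ x := by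
  rw [pow_succ]; exact lintegral_comp _ _ _ hf

lemma lintegral_pow_succ' (κ : Kernel 𝓧 𝓧) (n : ℕ) (x : 𝓧) {f : 𝓧 → ℝ≥0∞}
    (hf : Measurable f) :
    ∫⁻ y, f y ∂(κ ^ (n + 1)) x = ∫⁻ z, ∫⁻ y, f y ∂κ z ∂(κ ^ n) x := by
  rw [pow_succ']; exact lintegral_comp _ _ _ hf

lemma pow_apply_univ_antitone (κ : Kernel 𝓧 𝓧) (hκ : ∀ x, κ x univ ≤ 1) (x : 𝓧) :
    Antitone fun n ↦ (κ ^ n) x univ := by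
  refine antitone_nat_of_succ_le fun n ↦ ?_
  rw [pow_succ_apply_eq_lintegral _ _ _ MeasurableSet.univ]
  calc ∫⁻ y, κ y univ ∂(κ ^ n) x ≤ ∫⁻ _, 1 ∂(κ ^ n) x := lintegral_mono hκ
    _ = (κ ^ n) x univ := by rw [lintegral_one]

lemma lintegral_pow_le_add_mul (κ : Kernel 𝓧 𝓧) [IsMarkovKernel κ] {g : 𝓧 → ℝ≥0∞}
    (hg : Measurable g) {B : ℝ≥0∞} (hdrift : ∀ x, ∫⁻ y, g y ∂κ x ≤ g x + B) (n : ℕ) (x : 𝓧) :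
    ∫⁻ y, g y ∂(κ ^ n) x ≤ g x + n * B := by
  induction n with
  | zero => simp [lintegral_dirac' _ hg]
  | succ n ih =>
    calc ∫⁻ y, g y ∂(κ ^ (n + 1)) x ≤ ∫⁻ z, (g z + B) ∂(κ ^ n) x := by
          rw [lintegral_pow_succ' _ _ _ hg]; exact lintegral_mono hdrift
      _ ≤ g x + (n + 1 : ℕ) * B := by
          rw [lintegral_add_right _ measurable_const, MeasureTheory.lintegral_const,
            measure_univ, mul_one, Nat.cast_succ, add_mul, one_mul, ← add_assoc]
          gcongr

section KilledChain

variable {P : Kernel 𝓧 𝓧} {O : Set 𝓧} (hO : MeasurableSet O)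

lemma restrict_pow_succ_apply_univ (n : ℕ) (x : 𝓧) :
    ((P.restrict hO) ^ (n + 1)) x univ = ∫⁻ z in O, ((P.restrict hO) ^ n) z univ ∂P x := by
  rw [add_comm, pow_add_apply_eq_lintegral _ _ _ _ MeasurableSet.univ, pow_one,
    lintegral_restrict]

lemma restrict_pow_apply_compl (n : ℕ) {x : 𝓧} (hx : x ∈ O) :
    ((P.restrict hO) ^ n) x Oᶜ = 0 := by
  cases n with
  | zero => simp [hO.compl, hx]
  | succ n =>
    simp [pow_succ_apply_eq_lintegral _ _ _ hO.compl, restrict_apply' _ _ _ hO.compl]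

lemma lintegral_restrict_pow_succ_add_le [IsMarkovKernel P] {W : 𝓧 → ℝ≥0∞}
    (hW : Measurable W) {c : ℝ≥0∞} (hdrift : ∀ x ∈ O, ∫⁻ y, W y ∂P x + c ≤ W x) (n : ℕ)
    {x : 𝓧} (hx : x ∈ O) :
    ∫⁻ y, W y ∂((P.restrict hO) ^ (n + 1)) x + c * ((P.restrict hO) ^ (n + 1)) x univ
      ≤ ∫⁻ y, W y ∂((P.restrict hO) ^ n) x := by
  rw [lintegral_pow_succ' _ _ _ hW, pow_succ_apply_eq_lintegral _ _ _ MeasurableSet.univ,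
    ← lintegral_const_mul _ (Kernel.measurable_coe _ MeasurableSet.univ),
    ← lintegral_add_left hW.lintegral_kernel]
  refine lintegral_mono_ae ?_
  filter_upwards [mem_ae_iff.2 (restrict_pow_apply_compl hO n hx)] with y hy
  calc ∫⁻ z, W z ∂(P.restrict hO) y + c * (P.restrict hO) y univ
      ≤ ∫⁻ z, W z ∂P y + c := by
        rw [lintegral_restrict, restrict_apply, Measure.restrict_apply_univ]
        exact add_le_add (setLIntegral_le_lintegral _ _) (mul_le_of_le_one_right' prob_le_one)
    _ ≤ W y := hdrift y hy

lemma mul_nat_mul_restrict_pow_apply_univ_le [IsMarkovKernel P] {W : 𝓧 → ℝ≥0∞}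
    (hW : Measurable W) {c : ℝ≥0∞} (hdrift : ∀ x ∈ O, ∫⁻ y, W y ∂P x + c ≤ W x) (n : ℕ)
    {x : 𝓧} (hx : x ∈ O) :
    c * (n * ((P.restrict hO) ^ n) x univ) ≤ W x := by
  have htelescope : ∀ n : ℕ, ∫⁻ y, W y ∂((P.restrict hO) ^ n) x
      + c * ∑ k ∈ Finset.range n, ((P.restrict hO) ^ (k + 1)) x univ ≤ W x := by
    intro n
    induction n with
    | zero => simp [lintegral_dirac' _ hW]
    | succ n ih =>
      calc _ = (∫⁻ y, W y ∂((P.restrict hO) ^ (n + 1)) x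
              + c * ((P.restrict hO) ^ (n + 1)) x univ)
            + c * ∑ k ∈ Finset.range n, ((P.restrict hO) ^ (k + 1)) x univ := by
            rw [Finset.sum_range_succ]; ring
        _ ≤ W x := by
            refine le_trans ?_ ih
            gcongr
            exact lintegral_restrict_pow_succ_add_le hO hW hdrift n hx
  have hmass : ∀ y, (P.restrict hO) y univ ≤ 1 := fun y ↦ by
    rw [restrict_apply, Measure.restrict_apply_univ]; exact prob_le_one
  have hsum : (n : ℝ≥0∞) * ((P.restrict hO) ^ n) x univ
      ≤ ∑ k ∈ Finset.range n, ((P.restrict hO) ^ (k + 1)) x univ := by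
    simpa using Finset.card_nsmul_le_sum (Finset.range n) _ _ fun k hk ↦
      pow_apply_univ_antitone _ hmass x (Finset.mem_range.1 hk)
  calc c * (n * ((P.restrict hO) ^ n) x univ) ≤ _ := by gcongr
    _ ≤ W x := le_trans le_add_self (htelescope n)

lemma lintegral_pow_le_of_bounded_jumps [IsMarkovKernel P] {g : 𝓧 → ℝ≥0∞}
    (hg : Measurable g) {B D K : ℝ≥0∞} (hdrift : ∀ x, ∫⁻ y, g y ∂P x ≤ g x + B)
    (hout : ∀ x ∉ O, g x ≤ D) (hjump : ∀ x ∈ O, ∀ᵐ y ∂P x, g y ≤ g x + K) (n : ℕ) {x : 𝓧}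
    (hx : x ∈ O) :
    ∫⁻ y, g y ∂(P ^ n) x ≤ (g x + n * K) * ((P.restrict hO) ^ n) x univ + (D + n * B) := by
  induction n generalizing x with
  | zero => simp [lintegral_dirac' _ hg]
  | succ n ih =>
    have hin : ∫⁻ z in O, ∫⁻ y, g y ∂(P ^ n) z ∂P x
        ≤ (g x + (n + 1 : ℕ) * K) * ((P.restrict hO) ^ (n + 1)) x univ
          + (D + n * B) * P x O := by
      calc ∫⁻ z in O, ∫⁻ y, g y ∂(P ^ n) z ∂P x
          ≤ ∫⁻ z in O, ((g x + (n + 1 : ℕ) * K) * ((P.restrict hO) ^ n) z univ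
              + (D + n * B)) ∂P x := by
            refine lintegral_mono_ae ?_
            filter_upwards [ae_restrict_mem hO, ae_restrict_of_ae (hjump x hx)] with z hz hjz
            refine (ih hz).trans ?_
            gcongr ?_ * _ + _
            calc g z + n * K ≤ g x + K + n * K := by gcongr
              _ = g x + (n + 1 : ℕ) * K := by push_cast; ring
        _ = _ := by
            rw [lintegral_add_right _ measurable_const, MeasureTheory.setLIntegral_const,
              lintegral_const_mul _ (Kernel.measurable_coe _ MeasurableSet.univ),
              restrict_pow_succ_apply_univ]
    have hout' : ∫⁻ z in Oᶜ, ∫⁻ y, g y ∂(P ^ n) z ∂P x ≤ (D + n * B) * P x Oᶜ := by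
      rw [← MeasureTheory.setLIntegral_const]
      refine setLIntegral_mono measurable_const fun z hz ↦ ?_
      exact (lintegral_pow_le_add_mul P hg hdrift n z).trans (by gcongr; exact hout z hz)
    calc ∫⁻ y, g y ∂(P ^ (n + 1)) x
        = ∫⁻ z in O, ∫⁻ y, g y ∂(P ^ n) z ∂P x + ∫⁻ z in Oᶜ, ∫⁻ y, g y ∂(P ^ n) z ∂P x := by
          rw [lintegral_pow_succ _ _ _ hg, lintegral_add_compl _ hO]
      _ ≤ (g x + (n + 1 : ℕ) * K) * ((P.restrict hO) ^ (n + 1)) x univ + (D + n * B) := by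
          refine (add_le_add hin hout').trans_eq ?_
          rw [add_assoc, ← mul_add, measure_add_measure_compl hO, measure_univ (μ := P x),
            mul_one]
      _ ≤ _ := by gcongr; omega

end KilledChain

end ProbabilityTheory.Kernel

lemma kpow_eq_pow {𝓧 : Type*} [MeasurableSpace 𝓧] (P : Kernel 𝓧 𝓧) (n : ℕ) :
    kpow P n = P ^ n := by
  induction n with
  | zero => rfl
  | succ n ih => rw [kpow, ih, pow_succ']; rfl

lemma lintegral_ofReal_rpow_one_sub_add_le {Ω : Type*} [MeasurableSpace Ω] {μ : Measure Ω}
    [IsProbabilityMeasure μ] {f : Ω → ℝ} (hf : Measurable f) (hf0 : ∀ y, 0 ≤ f y)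
    {α v e : ℝ} (hα0 : 0 ≤ α) (hα1 : α ≤ 1) (hv : 0 < v) (he : 0 ≤ e)
    (hev : e * v ^ α ≤ v) (h : ∫⁻ y, ENNReal.ofReal (f y) ∂μ ≤ ENNReal.ofReal (v - e * v ^ α)) :
    ∫⁻ y, ENNReal.ofReal (f y ^ (1 - α)) ∂μ + ENNReal.ofReal ((1 - α) * e)
      ≤ ENNReal.ofReal (v ^ (1 - α)) := by
  have ha : 0 < v ^ α := Real.rpow_pos_of_pos hv α
  have hslope : 0 ≤ (1 - α) / v ^ α := div_nonneg (by linarith) ha.le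
  -- concavity of `u ↦ u ^ (1 - α)`: the graph lies below its tangent line at `v`
  have htangent : ∀ y, ENNReal.ofReal (f y ^ (1 - α))
      ≤ ENNReal.ofReal (α * v / v ^ α)
        + ENNReal.ofReal ((1 - α) / v ^ α) * ENNReal.ofReal (f y) := by
    intro y
    rw [← ENNReal.ofReal_mul hslope,
      ← ENNReal.ofReal_add (by positivity) (by positivity [hf0 y])]
    refine ENNReal.ofReal_le_ofReal ?_
    have hgm := Real.geom_mean_le_arith_mean2_weighted (sub_nonneg.2 hα1) hα0 (hf0 y) hv.le
      (sub_add_cancel 1 α)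
    rw [div_mul_eq_mul_div, ← add_div, le_div_iff₀ ha]
    linarith
  calc ∫⁻ y, ENNReal.ofReal (f y ^ (1 - α)) ∂μ + ENNReal.ofReal ((1 - α) * e)
      ≤ ENNReal.ofReal (α * v / v ^ α) + ENNReal.ofReal ((1 - α) / v ^ α)
          * ENNReal.ofReal (v - e * v ^ α) + ENNReal.ofReal ((1 - α) * e) := by
        gcongr
        refine (lintegral_mono htangent).trans ?_
        rw [lintegral_add_left measurable_const, lintegral_const, measure_univ, mul_one,
          lintegral_const_mul _ hf.ennreal_ofReal]
        gcongr
    _ = ENNReal.ofReal (v ^ (1 - α)) := by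
        rw [← ENNReal.ofReal_mul hslope, ← ENNReal.ofReal_add (by positivity)
            (mul_nonneg hslope (by linarith)),
          ← ENNReal.ofReal_add (by positivity) (mul_nonneg (by linarith) he),
          Real.rpow_sub hv, Real.rpow_one]
        congr 1
        field_simp
        ring

lemma add_mul_add_le_of_mass_le {v w m n K b D c β lam : ℝ} (hv : 0 ≤ v) (hw : 0 < w)
    (hm : 0 ≤ m) (hK : 0 ≤ K) (hb : 0 ≤ b) (hc : 0 < c) (hβ : 0 < β)
    (hmass : c * (n * m) ≤ w) (hn : lam * w ≤ n) (hn' : n ≤ lam * w + 1)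
    (hlam : lam * c * β = 2) (hQ : 4 * (K / c + lam * b) * w ≤ β * v)
    (hD : 4 * (D + b) ≤ β * v) :
    (v + n * K) * m + (D + n * b) ≤ β * v := by
  have hlc : lam * c = 2 / β := by rw [eq_div_iff hβ.ne', hlam]
  have hm2 : m ≤ β / 2 := by
    have : lam * c * m * w ≤ 1 * w := by nlinarith [mul_nonneg hc.le hm]
    have := le_of_mul_le_mul_right this hw
    rw [hlc, div_mul_eq_mul_div, div_le_one hβ] at this
    linarith
  have hvm : v * m ≤ β / 2 * v := by nlinarith
  have hKm : n * K * m ≤ K / c * w := by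
    rw [div_mul_eq_mul_div, le_div_iff₀ hc]
    nlinarith
  have hnb : n * b ≤ lam * b * w + b := by nlinarith
  linarith

lemma exists_mem_Ioo_log_lt (t : ℝ) : ∃ β ∈ Ioo (0 : ℝ) 1, Real.log β < t :=
  ⟨Real.exp (min t 0 - 1),
    ⟨Real.exp_pos _, Real.exp_lt_one_iff.2 (by linarith [min_le_right t 0])⟩,
    by rw [Real.log_exp]; linarith [min_le_left t 0]⟩

lemma tameBound_one_sub {α : ℝ} (hα : α < 1) :
    tameBound (1 - α) = (1 - α)⁻¹ * Real.log α := by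
  rw [tameBound, if_neg (sub_ne_zero.2 hα.ne')]
  congr 2
  ring

section PolynomialDrift

variable {𝓧 : Type*} [MeasurableSpace 𝓧] {P : Kernel 𝓧 𝓧} [IsMarkovKernel P]
  {V : 𝓧 → ℝ} {c α b d K : ℝ}

lemma lintegral_ofReal_rpow_one_sub_add_le_of_one_le (hVmeas : Measurable V)
    (hV1 : ∀ x, 1 ≤ V x) (hα : α ∈ Ioo (0 : ℝ) 1) (hc : 0 ≤ c) {x : 𝓧}
    (hx : ∫⁻ y, ENNReal.ofReal (V y) ∂P x ≤ ENNReal.ofReal (V x - c * V x ^ α)) :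
    ∫⁻ y, ENNReal.ofReal (V y ^ (1 - α)) ∂P x + ENNReal.ofReal ((1 - α) * c)
      ≤ ENNReal.ofReal (V x ^ (1 - α)) := by
  have hone : 1 ≤ ∫⁻ y, ENNReal.ofReal (V y) ∂P x := by
    calc 1 = ∫⁻ _, 1 ∂P x := by rw [lintegral_one, measure_univ]
      _ ≤ _ := lintegral_mono fun y ↦ ENNReal.one_le_ofReal.2 (hV1 y)
  have hgap := ENNReal.one_le_ofReal.1 (hone.trans hx)
  exact lintegral_ofReal_rpow_one_sub_add_le hVmeas (fun y ↦ by linarith [hV1 y]) hα.1.le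
    hα.2.le (by linarith [hV1 x]) hc (by linarith) hx

/-- `m` is the mass of the chain started at `x` that stays above level `d` for `n` steps. -/
lemma exists_lintegral_pow_le_of_killed_mass (hVmeas : Measurable V) (hV1 : ∀ x, 1 ≤ V x)
    (hα : α ∈ Ioo (0 : ℝ) 1) (hc : 0 < c) (hb : 0 ≤ b) (hd : 0 ≤ d) (hK : 0 ≤ K)
    (hdrift : ∀ x, ∫⁻ y, ENNReal.ofReal (V y) ∂P x ≤ ENNReal.ofReal (V x + b))
    (hdrift_out : ∀ x, d < V x →
      ∫⁻ y, ENNReal.ofReal (V y) ∂P x ≤ ENNReal.ofReal (V x - c * V x ^ α))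
    (hjump : ∀ x, d < V x → P x {y | V x + K < V y} = 0) {x : 𝓧} (hx : d < V x) (n : ℕ) :
    ∃ m : ℝ, 0 ≤ m ∧ (1 - α) * c * (n * m) ≤ V x ^ (1 - α) ∧
      ∫⁻ y, ENNReal.ofReal (V y) ∂(P ^ n) x
        ≤ ENNReal.ofReal ((V x + n * K) * m + (d + n * b)) := by
  have hO : MeasurableSet {y | d < V y} := measurableSet_lt measurable_const hVmeas
  have hM : ((P.restrict hO) ^ n) x univ ≠ ∞ := measure_ne_top _ _
  have hVx : 0 ≤ V x := by linarith [hV1 x]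
  refine ⟨(((P.restrict hO) ^ n) x univ).toReal, ENNReal.toReal_nonneg, ?_, ?_⟩
  · have hmass := Kernel.mul_nat_mul_restrict_pow_apply_univ_le hO
      (W := fun y ↦ ENNReal.ofReal (V y ^ (1 - α))) (hVmeas.pow_const (1 - α)).ennreal_ofReal
      (fun y hy ↦ lintegral_ofReal_rpow_one_sub_add_le_of_one_le hVmeas hV1 hα hc.le
        (hdrift_out y hy)) n hx
    rw [← ENNReal.ofReal_toReal hM, ← ENNReal.ofReal_natCast,
      ← ENNReal.ofReal_mul (by positivity),
      ← ENNReal.ofReal_mul (mul_nonneg (by linarith [hα.2]) hc.le)] at hmass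
    exact (ENNReal.ofReal_le_ofReal_iff (by positivity)).1 hmass
  · have hjump' : ∀ x ∈ {y | d < V y}, ∀ᵐ y ∂P x,
        ENNReal.ofReal (V y) ≤ ENNReal.ofReal (V x) + ENNReal.ofReal K := by
      intro x hx
      have hae : ∀ᵐ y ∂P x, V y ≤ V x + K := by
        simpa only [ae_iff, not_le] using hjump x hx
      filter_upwards [hae] with y hy
      exact (ENNReal.ofReal_le_ofReal hy).trans ENNReal.ofReal_add_le
    refine (Kernel.lintegral_pow_le_of_bounded_jumps hO hVmeas.ennreal_ofReal
      (fun x ↦ (hdrift x).trans ENNReal.ofReal_add_le)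
      (fun x hx ↦ ENNReal.ofReal_le_ofReal (not_lt.1 hx)) hjump' n hx).trans_eq ?_
    rw [ENNReal.ofReal_add (mul_nonneg (add_nonneg hVx (by positivity)) ENNReal.toReal_nonneg)
        (add_nonneg hd (by positivity)),
      ENNReal.ofReal_mul (add_nonneg hVx (by positivity)), ENNReal.ofReal_add hVx (by positivity),
      ENNReal.ofReal_add hd (by positivity), ENNReal.ofReal_mul (Nat.cast_nonneg n),
      ENNReal.ofReal_mul (Nat.cast_nonneg n), ENNReal.ofReal_natCast, ENNReal.ofReal_toReal hM]

lemma lintegral_pow_ceil_le (hVmeas : Measurable V) (hV1 : ∀ x, 1 ≤ V x)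
    (hα : α ∈ Ioo (0 : ℝ) 1) (hc : 0 < c) (hb : 0 ≤ b) (hd : 0 ≤ d) (hK : 0 ≤ K)
    (hdrift : ∀ x, ∫⁻ y, ENNReal.ofReal (V y) ∂P x ≤ ENNReal.ofReal (V x + b))
    (hdrift_out : ∀ x, d < V x →
      ∫⁻ y, ENNReal.ofReal (V y) ∂P x ≤ ENNReal.ofReal (V x - c * V x ^ α))
    (hjump : ∀ x, d < V x → P x {y | V x + K < V y} = 0) {β : ℝ} (hβ : 0 < β) {x : 𝓧}
    (hx : d < V x) (hQ : 4 * (K / ((1 - α) * c) + 2 / ((1 - α) * c * β) * b) ≤ β * V x ^ α)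
    (hD : 4 * (d + b) ≤ β * V x) :
    ∫⁻ y, ENNReal.ofReal (V y) ∂(P ^ ⌈2 / ((1 - α) * c * β) * V x ^ (1 - α)⌉₊) x
      ≤ ENNReal.ofReal (β * V x) := by
  have h1α : 0 < 1 - α := sub_pos.2 hα.2
  have hc₁ : 0 < (1 - α) * c := mul_pos h1α hc
  have hv : 0 < V x := by linarith [hV1 x]
  have hw : 0 < V x ^ (1 - α) := Real.rpow_pos_of_pos hv _
  obtain ⟨m, hm, hmass, hle⟩ := exists_lintegral_pow_le_of_killed_mass hVmeas hV1 hα hc hb hd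
    hK hdrift hdrift_out hjump hx ⌈2 / ((1 - α) * c * β) * V x ^ (1 - α)⌉₊
  refine hle.trans (ENNReal.ofReal_le_ofReal (add_mul_add_le_of_mass_le hv.le hw hm hK hb hc₁
    hβ hmass (Nat.le_ceil _) (Nat.ceil_lt_add_one (by positivity)).le
    (by field_simp [h1α.ne']) ?_ hD))
  calc _ ≤ β * V x ^ α * V x ^ (1 - α) := by gcongr
    _ = β * V x := by rw [mul_assoc, ← Real.rpow_add hv, add_sub_cancel, Real.rpow_one]

end PolynomialDrift

theorem exists_tamingF_drift {𝓧 : Type*} [MeasurableSpace 𝓧] {P : Kernel 𝓧 𝓧}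
    [IsMarkovKernel P] {V : 𝓧 → ℝ} {c α b d K : ℝ} (hVmeas : Measurable V)
    (hV1 : ∀ x, 1 ≤ V x) (hα : α ∈ Ioo (0 : ℝ) 1) (hc : 0 < c) (hb : 0 < b)
    (hPE : ∀ x, ∫⁻ y, ENNReal.ofReal (V y) ∂(P x)
      ≤ ENNReal.ofReal (V x - c * V x ^ α + {x | V x ≤ d}.indicator (fun _ ↦ b) x))
    (hK : 0 ≤ K) (hjump : ∀ x, d < V x → P x {y | V x + K < V y} = 0) :
    ∃ d' : ℝ, 1 ≤ d' ∧ ∃ lam : ℝ, 0 < lam ∧ ∃ β ∈ Ioo (0 : ℝ) 1, ∃ b' : ℝ,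
      Real.log β < (1 - α)⁻¹ * Real.log α ∧
      ∀ x, ∫⁻ y, ENNReal.ofReal (V y) ∂((kpow P (tamingF lam (1 - α) d' (V x))) x)
        ≤ ENNReal.ofReal (β * V x + {x' | V x' ≤ d'}.indicator (fun _ ↦ b') x) := by
  have hdrift : ∀ x, ∫⁻ y, ENNReal.ofReal (V y) ∂P x ≤ ENNReal.ofReal (V x + b) := fun x ↦
    (hPE x).trans <| ENNReal.ofReal_le_ofReal <| by
      have hind := indicator_le_self' (s := {x | V x ≤ d}) (fun _ _ ↦ hb.le) x
      have hpow := mul_nonneg hc.le (Real.rpow_nonneg (by linarith [hV1 x] : 0 ≤ V x) α)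
      linarith
  set d₀ := max d 0
  have hdrift_out : ∀ x, d₀ < V x →
      ∫⁻ y, ENNReal.ofReal (V y) ∂P x ≤ ENNReal.ofReal (V x - c * V x ^ α) := fun x hx ↦ by
    have hxC : x ∉ {x | V x ≤ d} := not_le.2 ((le_max_left d 0).trans_lt hx)
    simpa only [indicator_of_notMem hxC, add_zero] using hPE x
  obtain ⟨β, hβ, hlogβ⟩ := exists_mem_Ioo_log_lt ((1 - α)⁻¹ * Real.log α)
  set lam := 2 / ((1 - α) * c * β)
  obtain ⟨d', hd'⟩ : ∃ d', ∀ v ≥ d', 1 ≤ v ∧ d₀ ≤ v ∧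
      4 * (K / ((1 - α) * c) + lam * b) ≤ β * v ^ α ∧ 4 * (d₀ + b) ≤ β * v := by
    refine eventually_atTop.1 ?_
    filter_upwards [eventually_ge_atTop 1, eventually_ge_atTop d₀,
      (tendsto_rpow_atTop hα.1).eventually_ge_atTop (4 * (K / ((1 - α) * c) + lam * b) / β),
      eventually_ge_atTop (4 * (d₀ + b) / β)] with v h1 h2 h3 h4
    exact ⟨h1, h2, (div_le_iff₀' hβ.1).1 h3, (div_le_iff₀' hβ.1).1 h4⟩
  obtain ⟨hd'1, hd₀d', -⟩ := hd' d' le_rfl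
  have hlam : 0 < lam := div_pos two_pos (mul_pos (mul_pos (sub_pos.2 hα.2) hc) hβ.1)
  refine ⟨d', hd'1, lam, hlam, β, hβ, d' + b, hlogβ, fun x ↦ ?_⟩
  rw [kpow_eq_pow, tamingF]
  split_ifs with hx
  · rw [pow_one, indicator_of_mem (show x ∈ {x' | V x' ≤ d'} from hx)]
    exact (hdrift x).trans (ENNReal.ofReal_le_ofReal (by nlinarith [hV1 x, hβ.1, hβ.2]))
  · obtain ⟨-, -, hQ, hD⟩ := hd' (V x) (not_le.1 hx).le
    rw [indicator_of_notMem (show x ∉ {x' | V x' ≤ d'} from hx), add_zero]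
    exact lintegral_pow_ceil_le hVmeas hV1 hα hc hb.le (le_max_right d 0) hK hdrift hdrift_out
      (fun x hx ↦ hjump x ((le_max_left d 0).trans_lt hx)) hβ.1
      (hd₀d'.trans_lt (not_le.1 hx)) hQ hD

theorem stmt_10 {𝓧 : Type*} [MeasurableSpace 𝓧]
    (P : ProbabilityTheory.Kernel 𝓧 𝓧) [ProbabilityTheory.IsMarkovKernel P]
    (V : 𝓧 → ℝ) (hVmeas : Measurable V) (hV1 : ∀ x, 1 ≤ V x)
    (c α b d : ℝ) (hα : α ∈ Set.Ioo (0 : ℝ) 1) (hc : 0 < c) (hb : 0 < b)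
    (C : Set 𝓧) (hCdef : C = {x | V x ≤ d})
    (hPE : ∀ x, ∫⁻ y, ENNReal.ofReal (V y) ∂(P x)
      ≤ ENNReal.ofReal (V x - c * V x ^ α + C.indicator (fun _ => b) x))
    (hsmall : ∀ r : ℝ, IsSmallSet P {x | V x ≤ r})
    (hjumps : ∃ K : ℝ, 0 ≤ K ∧ ∀ x ∉ C, P x {y | V x + K < V y} = 0) :
    IsTame P V ∧
      ∃ d' : ℝ, 1 ≤ d' ∧ ∃ lam : ℝ, 0 < lam ∧ ∃ β ∈ Set.Ioo (0 : ℝ) 1, ∃ b' : ℝ,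
        Real.log β < (1 - α)⁻¹ * Real.log α ∧
        ∀ x, ∫⁻ y, ENNReal.ofReal (V y)
            ∂((kpow P (tamingF lam (1 - α) d' (V x))) x)
          ≤ ENNReal.ofReal (β * V x
              + Set.indicator {x' | V x' ≤ d'} (fun _ => b') x) := by
  subst hCdef
  obtain ⟨K, hK, hjump⟩ := hjumps
  obtain ⟨d', hd'1, lam, hlam, β, hβ, b', hlogβ, hdrift⟩ :=
    exists_tamingF_drift hVmeas hV1 hα hc hb hPE hK fun x hx ↦ hjump x (not_le.2 hx)
  refine ⟨⟨d', hd'1, hsmall d', lam, hlam, 1 - α, ⟨by linarith [hα.2], by linarith [hα.1]⟩,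
    β, hβ, b', ?_, hdrift⟩, d', hd'1, lam, hlam, β, hβ, b', hlogβ, hdrift⟩
  rwa [tameBound_one_sub hα.2]
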